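/- Let J : ℂ^{2^k} → ℂ^{2^n} be a linear isometry (J†J = I), let U be a unitary 2^k × 2^k matrix, and let |S⟩ ∈ ℂ^{2^k} be a unit vector such that ⟨S| J† P J |S⟩ ∈ {−1, 0, 1} for every P ∈ P_n^+ (this holds in particular when J is a Clifford encoding isometry of a stabilizer code and |S⟩ is a stabilizer state). Set |ψ̄⟩ = J U |S⟩. If there exists a subset R ⊆ {1, ..., n} such that Σ_{P ∈ P_n^+ : supp(P) = R} |⟨ψ̄| P |ψ̄⟩|² is not an integer, then there do not exist 2×2 unitary matrices V_1, ..., V_n and a real number θ with (V_1 ⊗ ⋯ ⊗ V_n) J = e^{iθ} J U. -/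

import Mathlib

open Matrix

/-- The single-qubit Pauli matrices I, X, Y, Z. -/
noncomputable def pauli : Fin 4 → Matrix (Fin 2) (Fin 2) ℂ
  | 0 => 1
  | 1 => !![0, 1; 1, 0]
  | 2 => !![0, -Complex.I; Complex.I, 0]
  | 3 => !![1, 0; 0, -1]

/-- The n-qubit Pauli string (with phase +1). -/
noncomputable def pauliString {n : ℕ} (s : Fin n → Fin 4) :
    Matrix (Fin n → Fin 2) (Fin n → Fin 2) ℂ :=
  fun x y => ∏ i, pauli (s i) (x i) (y i)

/-- The Kronecker product V_1 ⊗ ⋯ ⊗ V_n of single-qubit matrices. -/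
noncomputable def tensorFold {n : ℕ} (V : Fin n → Matrix (Fin 2) (Fin 2) ℂ) :
    Matrix (Fin n → Fin 2) (Fin n → Fin 2) ℂ :=
  fun x y => ∏ i, V i (x i) (y i)

/-!
Write `W = V_1 ⊗ ⋯ ⊗ V_n` and `φ = J S`; a transversal implementation would give
`W φ = e^{iθ} ψ`. Conjugation by `W` acts on Pauli strings factorwise through the Pauli
transfer matrices of the `V_i`. For unitary `V_i` these are orthogonal and fix the identity,
so they preserve the strings of support exactly `R`, and `∑_{supp P = R} |⟨ψ|P|ψ⟩|²` is
unchanged by `W` (and by the phase). For `φ` every term `|⟨φ|P|φ⟩|²` is `0` or `1`, so this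
sum is an integer.
-/

open ComplexConjugate

lemma star_mulVec_dotProduct_mulVec_mulVec {m m' : Type*} [Fintype m] [Fintype m']
    (W : Matrix m' m ℂ) (φ : m → ℂ) (M : Matrix m' m' ℂ) :
    star (W *ᵥ φ) ⬝ᵥ (M *ᵥ (W *ᵥ φ)) = star φ ⬝ᵥ ((Wᴴ * M * W) *ᵥ φ) := by
  rw [Matrix.star_mulVec, Matrix.mulVec_mulVec, ← Matrix.dotProduct_mulVec,
    Matrix.mulVec_mulVec, ← Matrix.mul_assoc]

lemma star_smul_dotProduct_mulVec_smul {m : Type*} [Fintype m] (c : ℂ) (φ : m → ℂ)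
    (M : Matrix m m ℂ) :
    star (c • φ) ⬝ᵥ (M *ᵥ (c • φ)) = (conj c * c) * (star φ ⬝ᵥ (M *ᵥ φ)) := by
  rw [Matrix.mulVec_smul, star_smul, smul_dotProduct, dotProduct_smul, smul_eq_mul,
    smul_eq_mul, mul_left_comm, ← mul_assoc, mul_comm c]
  rfl

lemma sum_norm_sq_sum_mul_eq_of_orthonormal {ι : Type*} [Fintype ι] [DecidableEq ι]
    (A : Finset ι) (D : ι → ι → ℂ) (e : ι → ℂ)
    (hD : ∀ t t', ∑ s ∈ A, D s t * conj (D s t') = if t = t' ∧ t ∈ A then 1 else 0) :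
    ∑ s ∈ A, ‖∑ t, D s t * e t‖ ^ 2 = ∑ t ∈ A, ‖e t‖ ^ 2 := by
  apply Complex.ofReal_injective
  push_cast
  simp_rw [← Complex.mul_conj']
  calc ∑ s ∈ A, (∑ t, D s t * e t) * conj (∑ t', D s t' * e t')
      = ∑ t, ∑ t', (∑ s ∈ A, D s t * conj (D s t')) * (e t * conj (e t')) := by
        simp_rw [map_sum, map_mul, Finset.sum_mul_sum, Finset.sum_mul]
        rw [Finset.sum_comm]
        refine Finset.sum_congr rfl fun t _ => ?_
        rw [Finset.sum_comm]
        refine Finset.sum_congr rfl fun t' _ => Finset.sum_congr rfl fun s _ => by ring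
    _ = ∑ t ∈ A, e t * conj (e t) := by
        simp_rw [hD, ite_mul, one_mul, zero_mul, ite_and]
        simp [Finset.sum_ite_eq, Finset.sum_ite_mem]

lemma pauli_conjTranspose (a : Fin 4) : (pauli a)ᴴ = pauli a := by
  fin_cases a <;> ext i j <;> fin_cases i <;> fin_cases j <;>
    simp [pauli, Matrix.conjTranspose_apply]

lemma trace_pauli (a : Fin 4) : (pauli a).trace = if a = 0 then 2 else 0 := by
  fin_cases a <;> simp [pauli, Matrix.trace, Fin.sum_univ_two]

lemma trace_pauli_mul_pauli (a b : Fin 4) :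
    (pauli a * pauli b).trace = if a = b then 2 else 0 := by
  fin_cases a <;> fin_cases b <;>
    simp [pauli, Matrix.trace, Fin.sum_univ_two] <;> ring_nf

lemma sum_trace_pauli_mul_smul_pauli (M : Matrix (Fin 2) (Fin 2) ℂ) :
    ∑ b : Fin 4, ((pauli b * M).trace / 2) • pauli b = M := by
  ext i j
  simp only [Matrix.sum_apply, Matrix.smul_apply, Matrix.trace, Matrix.diag, Matrix.mul_apply,
    Fin.sum_univ_four, Fin.sum_univ_two, smul_eq_mul]
  fin_cases i <;> fin_cases j <;> simp [pauli] <;> ring_nf <;>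
    simp [Complex.I_sq] <;> ring

lemma sum_trace_pauli_mul_mul_trace_pauli_mul (A B : Matrix (Fin 2) (Fin 2) ℂ) :
    ∑ a : Fin 4, (pauli a * A).trace * (pauli a * B).trace = 2 * (A * B).trace := by
  simp only [Matrix.trace, Matrix.diag, Matrix.mul_apply, Fin.sum_univ_four, Fin.sum_univ_two]
  simp [pauli]
  ring_nf
  simp [Complex.I_sq]
  ring

/-- The Pauli transfer matrix of `V`. -/
noncomputable def pauliCoeff (V : Matrix (Fin 2) (Fin 2) ℂ) (a b : Fin 4) : ℂ :=
  (pauli a * (V * pauli b * Vᴴ)).trace / 2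

section PauliCoeff

variable (V : Matrix (Fin 2) (Fin 2) ℂ)

lemma conjTranspose_mul_pauli_mul_eq_sum (a : Fin 4) :
    Vᴴ * pauli a * V = ∑ b : Fin 4, pauliCoeff V a b • pauli b := by
  conv_lhs => rw [← sum_trace_pauli_mul_smul_pauli (Vᴴ * pauli a * V)]
  refine Finset.sum_congr rfl fun b _ => ?_
  rw [pauliCoeff, ← Matrix.mul_assoc, ← Matrix.mul_assoc, Matrix.trace_mul_cycle,
    ← Matrix.mul_assoc, Matrix.trace_mul_cycle]
  simp only [Matrix.mul_assoc]

lemma conj_pauliCoeff (a b : Fin 4) : conj (pauliCoeff V a b) = pauliCoeff V a b := by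
  have hX : (V * pauli b * Vᴴ)ᴴ = V * pauli b * Vᴴ := by
    simp [Matrix.conjTranspose_mul, pauli_conjTranspose, Matrix.mul_assoc]
  rw [pauliCoeff, map_div₀, Complex.conj_ofNat, ← Complex.star_def, ← Matrix.trace_conjTranspose,
    Matrix.conjTranspose_mul, hX, pauli_conjTranspose, Matrix.trace_mul_comm]

variable {V} (hV : V ∈ Matrix.unitaryGroup (Fin 2) ℂ)
include hV

lemma pauliCoeff_zero_left (b : Fin 4) : pauliCoeff V 0 b = if b = 0 then 1 else 0 := by
  have hVV : Vᴴ * V = 1 := Matrix.mem_unitaryGroup_iff'.mp hV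
  rw [pauliCoeff, show pauli 0 = 1 from rfl, Matrix.one_mul, Matrix.trace_mul_cycle, hVV,
    Matrix.one_mul, trace_pauli]
  split_ifs <;> norm_num

lemma pauliCoeff_zero_right (a : Fin 4) : pauliCoeff V a 0 = if a = 0 then 1 else 0 := by
  have hVV : V * Vᴴ = 1 := Matrix.mem_unitaryGroup_iff.mp hV
  rw [pauliCoeff, show pauli 0 = 1 from rfl, Matrix.mul_one, hVV, Matrix.mul_one, trace_pauli]
  split_ifs <;> norm_num

lemma pauliCoeff_eq_zero {a b : Fin 4} (h : a = 0 ↔ b ≠ 0) : pauliCoeff V a b = 0 := by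
  by_cases ha : a = 0
  · subst ha; rw [pauliCoeff_zero_left hV, if_neg (h.mp rfl)]
  · rw [not_not.mp (mt h.mpr ha), pauliCoeff_zero_right hV, if_neg ha]

lemma sum_pauliCoeff_mul_conj (b b' : Fin 4) :
    ∑ a : Fin 4, pauliCoeff V a b * conj (pauliCoeff V a b') = if b = b' then 1 else 0 := by
  have hVV : Vᴴ * V = 1 := Matrix.mem_unitaryGroup_iff'.mp hV
  have hprod : (V * pauli b * Vᴴ) * (V * pauli b' * Vᴴ) = V * (pauli b * pauli b') * Vᴴ := by
    simp only [Matrix.mul_assoc]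
    rw [← Matrix.mul_assoc Vᴴ V, hVV, Matrix.one_mul]
  have htrace : (V * (pauli b * pauli b') * Vᴴ).trace = (pauli b * pauli b').trace := by
    rw [Matrix.trace_mul_cycle, ← Matrix.mul_assoc, hVV, Matrix.one_mul]
  simp_rw [conj_pauliCoeff, pauliCoeff, div_mul_div_comm, ← Finset.sum_div,
    sum_trace_pauli_mul_mul_trace_pauli_mul, hprod, htrace, trace_pauli_mul_pauli]
  split_ifs <;> norm_num

lemma sum_filter_pauliCoeff_mul_conj (p : Prop) [Decidable p] (b b' : Fin 4) :
    ∑ a ∈ Finset.univ.filter (fun a : Fin 4 => a ≠ 0 ↔ p),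
        pauliCoeff V a b * conj (pauliCoeff V a b') =
      if b = b' ∧ (b ≠ 0 ↔ p) then 1 else 0 := by
  by_cases hb : b ≠ 0 ↔ p
  · -- outside the filter `a` and `b` lie in different blocks of the transfer matrix
    rw [Finset.sum_filter_of_ne fun a _ h => ?_, sum_pauliCoeff_mul_conj hV]
    · simp [hb]
    · by_contra ha
      exact left_ne_zero_of_mul h (pauliCoeff_eq_zero hV (by tauto))
  · rw [if_neg (by tauto)]
    exact Finset.sum_eq_zero fun a ha => by
      rw [pauliCoeff_eq_zero hV (by simp at ha; tauto), zero_mul]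

end PauliCoeff

section TensorFold

variable {n : ℕ}

lemma tensorFold_conjTranspose (V : Fin n → Matrix (Fin 2) (Fin 2) ℂ) :
    (tensorFold V)ᴴ = tensorFold fun i => (V i)ᴴ := by
  ext x y
  simp [tensorFold, Matrix.conjTranspose_apply]

lemma tensorFold_mul (V W : Fin n → Matrix (Fin 2) (Fin 2) ℂ) :
    tensorFold V * tensorFold W = tensorFold fun i => V i * W i := by
  ext x y
  simp only [Matrix.mul_apply, tensorFold, Fintype.prod_sum, Finset.prod_mul_distrib]

lemma tensorFold_sum_smul_pauli (c : Fin n → Fin 4 → ℂ) :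
    tensorFold (fun i => ∑ b, c i b • pauli b) =
      ∑ t : Fin n → Fin 4, (∏ i, c i (t i)) • pauliString t := by
  ext x y
  simp only [tensorFold, pauliString, Matrix.sum_apply, Matrix.smul_apply, smul_eq_mul,
    Fintype.prod_sum, Finset.prod_mul_distrib]

lemma conjTranspose_tensorFold_mul_pauliString_mul (V : Fin n → Matrix (Fin 2) (Fin 2) ℂ)
    (s : Fin n → Fin 4) :
    (tensorFold V)ᴴ * pauliString s * tensorFold V =
      ∑ t : Fin n → Fin 4, (∏ i, pauliCoeff (V i) (s i) (t i)) • pauliString t := by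
  rw [tensorFold_conjTranspose, show pauliString s = tensorFold fun i => pauli (s i) from rfl,
    tensorFold_mul, tensorFold_mul, ← tensorFold_sum_smul_pauli]
  simp only [conjTranspose_mul_pauli_mul_eq_sum]

end TensorFold

section PauliMass

variable {n : ℕ}

def pauliSector (R : Finset (Fin n)) : Finset (Fin n → Fin 4) :=
  Finset.univ.filter fun s => ∀ i, s i ≠ 0 ↔ i ∈ R

lemma pauliSector_eq_piFinset (R : Finset (Fin n)) :
    pauliSector R =
      Fintype.piFinset fun i => Finset.univ.filter fun a : Fin 4 => a ≠ 0 ↔ i ∈ R := by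
  ext s
  simp [pauliSector]

lemma sum_pauliSector_prod_pauliCoeff_mul_conj {V : Fin n → Matrix (Fin 2) (Fin 2) ℂ}
    (hV : ∀ i, V i ∈ Matrix.unitaryGroup (Fin 2) ℂ) (R : Finset (Fin n)) (t t' : Fin n → Fin 4) :
    ∑ s ∈ pauliSector R,
        (∏ i, pauliCoeff (V i) (s i) (t i)) * conj (∏ i, pauliCoeff (V i) (s i) (t' i)) =
      if t = t' ∧ t ∈ pauliSector R then 1 else 0 := by
  simp_rw [map_prod, ← Finset.prod_mul_distrib]
  rw [pauliSector_eq_piFinset, ← Finset.prod_univ_sum _ fun i a =>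
    pauliCoeff (V i) a (t i) * conj (pauliCoeff (V i) a (t' i))]
  simp_rw [sum_filter_pauliCoeff_mul_conj (hV _), Fintype.prod_boole, Fintype.mem_piFinset,
    Finset.mem_filter, Finset.mem_univ, true_and, funext_iff, forall_and]

noncomputable def pauliMass (φ : (Fin n → Fin 2) → ℂ) (R : Finset (Fin n)) : ℝ :=
  ∑ s ∈ pauliSector R, ‖star φ ⬝ᵥ (pauliString s *ᵥ φ)‖ ^ 2

lemma pauliMass_smul {c : ℂ} (hc : ‖c‖ = 1) (φ : (Fin n → Fin 2) → ℂ) (R : Finset (Fin n)) :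
    pauliMass (c • φ) R = pauliMass φ R := by
  simp_rw [pauliMass, star_smul_dotProduct_mulVec_smul, mul_comm (conj c), Complex.mul_conj', hc]
  simp

lemma pauliMass_tensorFold_mulVec {V : Fin n → Matrix (Fin 2) (Fin 2) ℂ}
    (hV : ∀ i, V i ∈ Matrix.unitaryGroup (Fin 2) ℂ) (φ : (Fin n → Fin 2) → ℂ)
    (R : Finset (Fin n)) :
    pauliMass (tensorFold V *ᵥ φ) R = pauliMass φ R := by
  simp_rw [pauliMass, star_mulVec_dotProduct_mulVec_mulVec,
    conjTranspose_tensorFold_mul_pauliString_mul, Matrix.sum_mulVec, dotProduct_sum,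
    Matrix.smul_mulVec, dotProduct_smul, smul_eq_mul]
  exact sum_norm_sq_sum_mul_eq_of_orthonormal _ _ _
    (sum_pauliSector_prod_pauliCoeff_mul_conj hV R)

lemma pauliMass_eq_card {φ : (Fin n → Fin 2) → ℂ}
    (hφ : ∀ t, star φ ⬝ᵥ (pauliString t *ᵥ φ) ∈ ({-1, 0, 1} : Set ℂ)) (R : Finset (Fin n)) :
    pauliMass φ R =
      ((pauliSector R).filter fun t => star φ ⬝ᵥ (pauliString t *ᵥ φ) ≠ 0).card := by
  rw [pauliMass, Finset.card_filter, Nat.cast_sum]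
  refine Finset.sum_congr rfl fun t _ => ?_
  obtain h | h | h : _ = -1 ∨ _ = 0 ∨ _ = 1 := hφ t <;> simp [h]

end PauliMass

theorem transversal_gate_testing_general {n k : ℕ}
    (J : Matrix (Fin n → Fin 2) (Fin k → Fin 2) ℂ)
    (U : Matrix (Fin k → Fin 2) (Fin k → Fin 2) ℂ)
    (S : (Fin k → Fin 2) → ℂ)
    (hstab : ∀ s : Fin n → Fin 4,
      star S ⬝ᵥ ((Jᴴ * pauliString s * J) *ᵥ S) ∈ ({-1, 0, 1} : Set ℂ))
    (ψ : (Fin n → Fin 2) → ℂ)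
    (hψ : ψ = J *ᵥ (U *ᵥ S))
    (hnonint : ∃ R : Finset (Fin n),
      ¬ ∃ z : ℤ,
        (∑ s ∈ Finset.univ.filter (fun s : Fin n → Fin 4 => ∀ i, s i ≠ 0 ↔ i ∈ R),
          ‖star ψ ⬝ᵥ (pauliString s *ᵥ ψ)‖ ^ 2) = (z : ℝ)) :
    ¬ ∃ (V : Fin n → Matrix (Fin 2) (Fin 2) ℂ) (θ : ℝ),
        (∀ i, V i ∈ Matrix.unitaryGroup (Fin 2) ℂ) ∧
        tensorFold V * J = Complex.exp (θ * Complex.I) • (J * U) := by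
  rintro ⟨V, θ, hV, hVJ⟩
  obtain ⟨R, hR⟩ := hnonint
  set c := Complex.exp (θ * Complex.I)
  have hc : ‖c‖ = 1 := Complex.norm_exp_ofReal_mul_I θ
  have hWφ : tensorFold V *ᵥ (J *ᵥ S) = c • ψ := by
    rw [hψ, Matrix.mulVec_mulVec, hVJ, Matrix.smul_mulVec, Matrix.mulVec_mulVec]
  have hJS (t : Fin n → Fin 4) :
      star (J *ᵥ S) ⬝ᵥ (pauliString t *ᵥ (J *ᵥ S)) ∈ ({-1, 0, 1} : Set ℂ) := by
    rw [star_mulVec_dotProduct_mulVec_mulVec]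
    exact hstab t
  have hmass : pauliMass ψ R = pauliMass (J *ᵥ S) R := by
    rw [← pauliMass_smul hc, ← hWφ, pauliMass_tensorFold_mulVec hV]
  exact hR ⟨_, hmass.trans ((pauliMass_eq_card hJS R).trans (Int.cast_natCast _).symm)⟩

/-- Transversal-gate testing criterion.  Let J be an isometry from k qubits
into n qubits, U a k-qubit unitary, |S⟩ a unit vector all of whose Pauli expectation
values through J lie in {−1,0,1}, and |ψ̄⟩ = J U |S⟩.  If for some R ⊆ {1,...,n} the sum
Σ_{P ∈ P_n^+ : supp(P) = R} |⟨ψ̄|P|ψ̄⟩|² is not an integer, then there are no single-qubit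
unitaries V_1,...,V_n and phase e^{iθ} with (V_1 ⊗ ⋯ ⊗ V_n) J = e^{iθ} J U. -/
theorem transversal_gate_testing {n k : ℕ}
    (J : Matrix (Fin n → Fin 2) (Fin k → Fin 2) ℂ)
    (hJ : Jᴴ * J = 1)
    (U : Matrix (Fin k → Fin 2) (Fin k → Fin 2) ℂ)
    (hU : U ∈ Matrix.unitaryGroup (Fin k → Fin 2) ℂ)
    (S : (Fin k → Fin 2) → ℂ)
    (hSunit : star S ⬝ᵥ S = 1)
    (hstab : ∀ s : Fin n → Fin 4,
      star S ⬝ᵥ ((Jᴴ * pauliString s * J) *ᵥ S) ∈ ({-1, 0, 1} : Set ℂ))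
    (ψ : (Fin n → Fin 2) → ℂ)
    (hψ : ψ = J *ᵥ (U *ᵥ S))
    (hnonint : ∃ R : Finset (Fin n),
      ¬ ∃ z : ℤ,
        (∑ s ∈ Finset.univ.filter (fun s : Fin n → Fin 4 => ∀ i, s i ≠ 0 ↔ i ∈ R),
          ‖star ψ ⬝ᵥ (pauliString s *ᵥ ψ)‖ ^ 2) = (z : ℝ)) :
    ¬ ∃ (V : Fin n → Matrix (Fin 2) (Fin 2) ℂ) (θ : ℝ),
        (∀ i, V i ∈ Matrix.unitaryGroup (Fin 2) ℂ) ∧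
        tensorFold V * J = Complex.exp (θ * Complex.I) • (J * U) :=
  transversal_gate_testing_general J U S hstab ψ hψ hnonint
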